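/- For all sufficiently small ε > 0 the following hold: (i) f(ζ,0) = 0 and ∂f/∂θ(ζ,0) = 0 for all ζ sufficiently close to ζ_c; (ii) for all strictly minimal simple zeros (ζ,ω) ∈ K sufficiently close to (ζ_c,ω_c) and all nonzero θ with −ε ≤ θ ≤ ε, one has Re f(ζ,θ) > 0. -/

import Mathlib

open Complex Filter Topology

/-- The open polydisk centered at the origin in `ℂ²` with radii `R₁`, `R₂`. -/
def polyDisk (R₁ R₂ : ℝ) : Set (ℂ × ℂ) :=
  {p : ℂ × ℂ | ‖p.1‖ < R₁ ∧ ‖p.2‖ < R₂}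

/-- Partial derivative of `H` with respect to the second variable. -/
noncomputable def Hw (H : ℂ × ℂ → ℂ) (p : ℂ × ℂ) : ℂ := deriv (fun w => H (p.1, w)) p.2

/-- `(ζ,ω)` is a strictly minimal simple zero of `H`. -/
def StrictlyMinimalSimpleZero (H : ℂ × ℂ → ℂ) (p : ℂ × ℂ) : Prop :=
  H p = 0 ∧ fderiv ℂ H p ≠ 0 ∧ p.1 * p.2 ≠ 0 ∧
    ∀ q : ℂ × ℂ, ‖q.1‖ ≤ ‖p.1‖ → ‖q.2‖ ≤ ‖p.2‖ →
      H q = 0 → q = p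

/-- The derived amplitude term
`a(ζ,θ) := −G(ζe^{iθ}, g(ζe^{iθ})) / (g(ζe^{iθ})·H_w(ζe^{iθ}, g(ζe^{iθ})))`. -/
noncomputable def amp (G H : ℂ × ℂ → ℂ) (g : ℂ → ℂ) (ζ θ : ℂ) : ℂ :=
  -G (ζ * Complex.exp (θ * Complex.I), g (ζ * Complex.exp (θ * Complex.I))) /
    (g (ζ * Complex.exp (θ * Complex.I)) *
      Hw H (ζ * Complex.exp (θ * Complex.I), g (ζ * Complex.exp (θ * Complex.I))))

/-- The derived phase term `f(ζ,θ) := log(g(ζe^{iθ})/g(ζ)) − iθ·ζ·g'(ζ)/g(ζ)`. -/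
noncomputable def phase (g : ℂ → ℂ) (ζ θ : ℂ) : ℂ :=
  Complex.log (g (ζ * Complex.exp (θ * Complex.I)) / g ζ)
    - Complex.I * θ * (ζ * deriv g ζ / g ζ)

/-!
For real `θ`, `Re f(ζ,θ) = log |g(ζe^{iθ})/g(ζ)| − θ · Re(i ζ g'(ζ)/g(ζ))`. Near `(ζ_c, ω_c)` the
zero set of `H` is the graph of `g`, so `(ζe^{iθ}, g(ζe^{iθ}))` is a zero of `H` whose first
coordinate has modulus `|ζ|`; strict minimality of `(ζ, g ζ)` then forces
`|g(ζe^{iθ})| > |g(ζ)|` for small `θ ≠ 0`. Hence `θ ↦ log |g(ζe^{iθ})/g(ζ)|` is minimal at `0`,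
its derivative `Re(i ζ g'(ζ)/g(ζ))` there vanishes, and `Re f(ζ,θ) = log |g(ζe^{iθ})/g(ζ)| > 0`.
Continuity of `(ζ,θ) ↦ ζe^{iθ}` makes the range of `θ` uniform in `ζ`.
-/

section Phase

variable {g : ℂ → ℂ} {ζ : ℂ}

theorem phase_zero_right (g : ℂ → ℂ) (ζ : ℂ) : phase g ζ 0 = 0 := by
  rcases eq_or_ne (g ζ) 0 with h | h <;> simp [phase, h]

theorem hasDerivAt_log_div_comp_rotation (hg : DifferentiableAt ℂ g ζ) (h0 : g ζ ≠ 0) :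
    HasDerivAt (fun θ : ℂ => Complex.log (g (ζ * exp (θ * I)) / g ζ))
      (I * (ζ * deriv g ζ / g ζ)) 0 := by
  have hrot : HasDerivAt (fun θ : ℂ => ζ * exp (θ * I)) (ζ * I) 0 := by
    simpa using (((hasDerivAt_id (0 : ℂ)).mul_const I).cexp).const_mul ζ
  have hcomp : HasDerivAt (fun θ : ℂ => g (ζ * exp (θ * I))) (deriv g ζ * (ζ * I)) 0 :=
    (by simpa using hg.hasDerivAt : HasDerivAt g _ (ζ * exp (0 * I))).comp 0 hrot
  have hval : g (ζ * exp (0 * I)) / g ζ = 1 := by simp [h0]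
  have hlog := (hcomp.div_const (g ζ)).clog (by rw [hval]; exact one_mem_slitPlane)
  rw [hval] at hlog
  convert hlog using 1
  field_simp

theorem hasDerivAt_phase_zero (hg : DifferentiableAt ℂ g ζ) (h0 : g ζ ≠ 0) :
    HasDerivAt (phase g ζ) 0 0 := by
  have hlin : HasDerivAt (fun θ : ℂ => I * θ * (ζ * deriv g ζ / g ζ))
      (I * (ζ * deriv g ζ / g ζ)) 0 := by
    simpa using ((hasDerivAt_id (0 : ℂ)).const_mul I).mul_const (ζ * deriv g ζ / g ζ)
  have h := (hasDerivAt_log_div_comp_rotation hg h0).sub hlin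
  rw [sub_self] at h
  exact h

theorem re_I_mul_logDeriv_eq_zero_of_eventually_norm_le (hg : DifferentiableAt ℂ g ζ)
    (h0 : g ζ ≠ 0)
    (hmin : ∀ᶠ θ : ℝ in 𝓝 0, ‖g ζ‖ ≤ ‖g (ζ * exp (θ * I))‖) :
    (I * (ζ * deriv g ζ / g ζ)).re = 0 := by
  have hderiv : HasDerivAt (fun θ : ℝ => (Complex.log (g (ζ * exp (θ * I)) / g ζ)).re)
      (I * (ζ * deriv g ζ / g ζ)).re 0 := by
    have h := hasDerivAt_log_div_comp_rotation hg h0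
    rw [← ofReal_zero] at h
    exact h.real_of_complex
  have hlocmin : IsLocalMin (fun θ : ℝ => (Complex.log (g (ζ * exp (θ * I)) / g ζ)).re) 0 := by
    filter_upwards [hmin] with θ hθ
    have hpos : 0 < ‖g ζ‖ := norm_pos_iff.mpr h0
    simp only [ofReal_zero, zero_mul, exp_zero, mul_one, div_self h0, log_one, zero_re,
      log_re, norm_div]
    exact Real.log_nonneg ((one_le_div hpos).mpr hθ)
  rw [← hderiv.deriv]
  exact hlocmin.deriv_eq_zero

theorem re_phase_eq_log (h : (I * (ζ * deriv g ζ / g ζ)).re = 0) (θ : ℝ) :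
    (phase g ζ θ).re = Real.log (‖g (ζ * exp (θ * I))‖ / ‖g ζ‖) := by
  rw [phase, sub_re, mul_comm I, mul_assoc, re_ofReal_mul, h, mul_zero, sub_zero, log_re,
    norm_div]

theorem re_phase_pos_of_norm_lt (hg : DifferentiableAt ℂ g ζ) (h0 : g ζ ≠ 0)
    (hmin : ∀ᶠ θ : ℝ in 𝓝 0, ‖g ζ‖ ≤ ‖g (ζ * exp (θ * I))‖) {θ : ℝ}
    (hθ : ‖g ζ‖ < ‖g (ζ * exp (θ * I))‖) :
    0 < (phase g ζ θ).re := by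
  rw [re_phase_eq_log (re_I_mul_logDeriv_eq_zero_of_eventually_norm_le hg h0 hmin)]
  exact Real.log_pos ((one_lt_div (norm_pos_iff.mpr h0)).mpr hθ)

end Phase

theorem exp_ofReal_mul_I_ne_one {θ : ℝ} (h0 : θ ≠ 0) (hπ : |θ| < Real.pi) :
    exp (θ * I) ≠ 1 := by
  intro h
  have hbound : -Real.pi < (θ * I : ℂ).im ∧ (θ * I : ℂ).im ≤ Real.pi := by
    simp only [mul_I_im, ofReal_re]
    exact ⟨(abs_lt.mp hπ).1, (abs_lt.mp hπ).2.le⟩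
  have := exp_inj_of_neg_pi_lt_of_le_pi hbound.1 hbound.2 (by simp [Real.pi_pos])
    (by simp [Real.pi_pos.le]) (h.trans exp_zero.symm)
  exact h0 (by simpa using this)

theorem exists_forall_rotation_mem {s : Set ℂ} {ζ₀ : ℂ} (hs : s ∈ 𝓝 ζ₀) :
    ∃ ρ > 0, ∃ ε > 0, ∀ ζ, dist ζ ζ₀ < ρ → ∀ θ : ℝ, |θ| ≤ ε → ζ * exp (θ * I) ∈ s := by
  have hcont : Continuous fun q : ℂ × ℝ => q.1 * exp (q.2 * I) := by fun_prop
  have hpre : (fun q : ℂ × ℝ => q.1 * exp (q.2 * I)) ⁻¹' s ∈ 𝓝 (ζ₀, (0 : ℝ)) :=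
    hcont.continuousAt.preimage_mem_nhds (by simpa using hs)
  obtain ⟨r, hr, hball⟩ := Metric.mem_nhds_iff.mp hpre
  refine ⟨r, hr, r / 2, half_pos hr, fun ζ hζ θ hθ => hball (a := (ζ, θ)) ?_⟩
  rw [Metric.mem_ball, Prod.dist_eq, max_lt_iff, Real.dist_0_eq_abs]
  exact ⟨hζ, by linarith⟩

theorem StrictlyMinimalSimpleZero.norm_snd_lt_of_rotation {H : ℂ × ℂ → ℂ} {p : ℂ × ℂ}
    (hp : StrictlyMinimalSimpleZero H p) {θ : ℝ} (hθ : exp (θ * I) ≠ 1) {w : ℂ}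
    (hw : H (p.1 * exp (θ * I), w) = 0) : ‖p.2‖ < ‖w‖ := by
  obtain ⟨-, -, hne, hmin⟩ := hp
  by_contra! hle
  have hnorm : ‖p.1 * exp (θ * I)‖ ≤ ‖p.1‖ := by simp [norm_exp]
  have hfst : p.1 * exp (θ * I) = p.1 * 1 := by
    rw [mul_one]; exact congrArg Prod.fst (hmin _ hnorm hle hw)
  exact hθ (mul_left_cancel₀ (left_ne_zero_of_mul hne) hfst)

theorem StrictlyMinimalSimpleZero.re_phase_pos {H : ℂ × ℂ → ℂ} {g : ℂ → ℂ} {ζ : ℂ} {ε : ℝ}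
    (hp : StrictlyMinimalSimpleZero H (ζ, g ζ)) (hg : DifferentiableAt ℂ g ζ)
    (hε : ε < Real.pi)
    (hgraph : ∀ θ : ℝ, |θ| ≤ ε → H (ζ * exp (θ * I), g (ζ * exp (θ * I))) = 0)
    {θ : ℝ} (hθ0 : θ ≠ 0) (hθ : |θ| ≤ ε) :
    0 < (phase g ζ θ).re := by
  have hgrow : ∀ θ : ℝ, |θ| ≤ ε → θ ≠ 0 → ‖g ζ‖ < ‖g (ζ * exp (θ * I))‖ := fun θ hθ hθ0 =>
    hp.norm_snd_lt_of_rotation (exp_ofReal_mul_I_ne_one hθ0 (hθ.trans_lt hε)) (hgraph θ hθ)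
  have hmin : ∀ᶠ θ : ℝ in 𝓝 0, ‖g ζ‖ ≤ ‖g (ζ * exp (θ * I))‖ := by
    filter_upwards [Metric.closedBall_mem_nhds (0 : ℝ) ((abs_pos.mpr hθ0).trans_le hθ)]
      with θ hθ
    rcases eq_or_ne θ 0 with rfl | hθ0
    · simp
    · rw [Metric.mem_closedBall, Real.dist_0_eq_abs] at hθ
      exact (hgrow θ hθ hθ0).le
  exact re_phase_pos_of_norm_lt hg (right_ne_zero_of_mul hp.2.2.1) hmin (hgrow θ hθ hθ0)

theorem stmt2_general (H : ℂ × ℂ → ℂ)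
    (K : Set (ℂ × ℂ))
    (hK : ∀ p ∈ K, StrictlyMinimalSimpleZero H p)
    (ζc ωc : ℂ) (hmem : (ζc, ωc) ∈ K)
    (g : ℂ → ℂ) (hg : AnalyticAt ℂ g ζc) (hgc : g ζc = ωc)
    (hparam : ∀ᶠ p : ℂ × ℂ in 𝓝 (ζc, ωc), (H p = 0 ↔ p.2 = g p.1)) :
    ∃ ε₀ > 0, ∀ ε : ℝ, 0 < ε → ε ≤ ε₀ →
      (∀ᶠ ζ in 𝓝 ζc, phase g ζ 0 = 0 ∧ deriv (phase g ζ) 0 = 0) ∧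
      ∃ ρ > 0, ∀ p ∈ K, dist p (ζc, ωc) < ρ →
        ∀ θ : ℝ, θ ≠ 0 → -ε ≤ θ → θ ≤ ε → 0 < (phase g p.1 (θ : ℂ)).re := by
  have hgc0 : g ζc ≠ 0 := hgc ▸ right_ne_zero_of_mul (hK _ hmem).2.2.1
  have hgood : ∀ᶠ ζ in 𝓝 ζc, DifferentiableAt ℂ g ζ ∧ g ζ ≠ 0 :=
    (hg.eventually_analyticAt.mono fun _ h => h.differentiableAt).and
      (hg.continuousAt.eventually_ne hgc0)
  have hgraph : ∀ᶠ ζ in 𝓝 ζc, H (ζ, g ζ) = 0 := by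
    have hcurve : Tendsto (fun ζ => (ζ, g ζ)) (𝓝 ζc) (𝓝 (ζc, ωc)) :=
      tendsto_id.prodMk_nhds (hgc ▸ hg.continuousAt)
    exact (hcurve.eventually hparam).mono fun ζ h => h.mpr rfl
  obtain ⟨ρ₀, hρ₀, ε₀, hε₀, hrot⟩ := exists_forall_rotation_mem hgraph
  obtain ⟨ρ₁, hρ₁, hgood'⟩ := Metric.eventually_nhds_iff.mp hgood
  obtain ⟨ρ₂, hρ₂, hparam'⟩ := Metric.eventually_nhds_iff.mp hparam
  refine ⟨min ε₀ 1, by positivity, fun ε _ hεle => ⟨?_, min (min ρ₀ ρ₁) ρ₂, by positivity, ?_⟩⟩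
  · exact hgood.mono fun ζ h => ⟨phase_zero_right g ζ, (hasDerivAt_phase_zero h.1 h.2).deriv⟩
  intro p hp hdist θ hθ0 hθl hθu
  have hdist₁ : dist p.1 ζc < min (min ρ₀ ρ₁) ρ₂ :=
    (le_max_left _ _).trans_lt (Prod.dist_eq (x := p) (y := (ζc, ωc)) ▸ hdist)
  have hp2 : p.2 = g p.1 := (hparam' (hdist.trans_le (min_le_right _ _))).mp (hK p hp).1
  have hp' : StrictlyMinimalSimpleZero H (p.1, g p.1) := by rw [← hp2]; exact hK p hp
  have hdiff := (hgood' (hdist₁.trans_le ((min_le_left _ _).trans (min_le_right _ _)))).1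
  have hrot' : ∀ θ : ℝ, |θ| ≤ min ε₀ 1 →
      H (p.1 * exp (θ * I), g (p.1 * exp (θ * I))) = 0 := fun θ hθ =>
    hrot _ (hdist₁.trans_le ((min_le_left _ _).trans (min_le_left _ _))) θ
      (hθ.trans (min_le_left _ _))
  exact hp'.re_phase_pos hdiff (by linarith [min_le_right ε₀ 1, Real.pi_gt_three]) hrot' hθ0
    ((abs_le.mpr ⟨hθl, hθu⟩).trans hεle)

/-- Part of Lemma 3.3: for all sufficiently small `ε > 0`: (i) `f(ζ,0) = 0` and
`∂f/∂θ(ζ,0) = 0` for all `ζ` sufficiently close to `ζ_c`; (ii) for all strictly minimal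
simple zeros `(ζ,ω) ∈ K` sufficiently close to `(ζ_c,ω_c)` and all nonzero `θ ∈ [−ε,ε]`,
`Re f(ζ,θ) > 0`. -/
theorem stmt2 (R₁ R₂ : ℝ) (hR₁ : 0 < R₁) (hR₂ : 0 < R₂) (G H : ℂ × ℂ → ℂ)
    (hG : AnalyticOnNhd ℂ G (polyDisk R₁ R₂)) (hH : AnalyticOnNhd ℂ H (polyDisk R₁ R₂))
    (hH0 : H (0, 0) ≠ 0)
    (K : Set (ℂ × ℂ)) (hKcpt : IsCompact K) (hKD : K ⊆ polyDisk R₁ R₂)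
    (hK : ∀ p ∈ K, StrictlyMinimalSimpleZero H p)
    (ζc ωc : ℂ) (hmem : (ζc, ωc) ∈ K) (hHw : Hw H (ζc, ωc) ≠ 0)
    (g : ℂ → ℂ) (hg : AnalyticAt ℂ g ζc) (hgc : g ζc = ωc)
    (hparam : ∀ᶠ p : ℂ × ℂ in 𝓝 (ζc, ωc), (H p = 0 ↔ p.2 = g p.1)) :
    ∃ ε₀ > 0, ∀ ε : ℝ, 0 < ε → ε ≤ ε₀ →
      (∀ᶠ ζ in 𝓝 ζc, phase g ζ 0 = 0 ∧ deriv (phase g ζ) 0 = 0) ∧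
      ∃ ρ > 0, ∀ p ∈ K, dist p (ζc, ωc) < ρ →
        ∀ θ : ℝ, θ ≠ 0 → -ε ≤ θ → θ ≤ ε → 0 < (phase g p.1 (θ : ℂ)).re :=
  stmt2_general H K hK ζc ωc hmem g hg hgc hparam
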